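/- arXiv:2104.14967 — 2 statements merged into one kernel-verified Lean document; each statement's English description precedes it below -/
import Mathlib

section
/- If G is a centralizer abelian group (the centralizer of every non-identity element is abelian), then for all u, v ∈ G \ Z(G), either C(u) = C(v) or C(u) ∩ C(v) = Z(G). -/
/-- The commuting graph of a group: distinct vertices are adjacent iff they commute. -/
def commGraph (G : Type*) [Group G] : SimpleGraph G where
  Adj u v := u ≠ v ∧ u * v = v * u
  symm := ⟨fun _ _ h => ⟨h.1.symm, h.2.symm⟩⟩
  loopless := ⟨fun _ h => h.1 rfl⟩

instance {G : Type*} [Group G] [DecidableEq G] : DecidableRel (commGraph G).Adj :=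
  fun _ _ => instDecidableAnd

/-- The Laplacian matrix of the commuting graph. -/
noncomputable def commLap (G : Type*) [Group G] [Fintype G] [DecidableEq G] :
    Matrix G G ℝ :=
  SimpleGraph.lapMatrix ℝ (commGraph G)

/-- Multiplicity of `μ` as an eigenvalue of the Laplacian of the commuting graph. -/
noncomputable def lapMult (G : Type*) [Group G] [Fintype G] [DecidableEq G] (μ : ℝ) : ℕ :=
  Module.finrank ℝ (LinearMap.ker (Matrix.toLin' (commLap G - μ • 1)))

/-- Centralizer of an element, as a set. -/
def centSet {G : Type*} [Group G] (u : G) : Set G := {x | x * u = u * x}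

/-- Edge boundary of a set in the commuting graph. -/
def edgeBoundary (G : Type*) [Group G] (S : Set G) : Set (Sym2 G) :=
  {e | e ∈ (commGraph G).edgeSet ∧ ∃ u ∈ S, ∃ v ∈ Sᶜ, e = s(u, v)}

def IsCentralizerAbelian (G : Type*) [Group G] : Prop :=
  ∀ x : G, x ≠ 1 → ∀ a ∈ centSet x, ∀ b ∈ centSet x, a * b = b * a

section

variable {G : Type*} [Group G]

theorem mem_centSet_comm {a b : G} : a ∈ centSet b ↔ b ∈ centSet a :=
  eq_comm

theorem center_subset_centSet (u : G) : (Subgroup.center G : Set G) ⊆ centSet u :=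
  fun _ hz => (Subgroup.mem_center_iff.mp hz u).symm

theorem ne_one_of_notMem_center {u : G} (hu : u ∉ (Subgroup.center G : Set G)) : u ≠ 1 :=
  fun h => hu (h ▸ (Subgroup.center G).one_mem)

/-- Each of `C(u)`, `C(w)` is abelian and contains both `u` and `w`, so each lies in the other. -/
theorem IsCentralizerAbelian.centSet_eq_of_mem (hG : IsCentralizerAbelian G) {u w : G}
    (hu : u ≠ 1) (hw : w ≠ 1) (hwu : w ∈ centSet u) : centSet u = centSet w := by
  have huw : u ∈ centSet w := mem_centSet_comm.mp hwu
  ext x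
  exact ⟨fun hx => hG u hu x hx w hwu, fun hx => hG w hw x hx u huw⟩

end

theorem centralizer_abelian_implies_condition_general (G : Type*) [Group G]
    (hca : ∀ x : G, x ≠ 1 → ∀ a ∈ centSet x, ∀ b ∈ centSet x, a * b = b * a) :
    ∀ u v : G, u ∉ (Subgroup.center G : Set G) → v ∉ (Subgroup.center G : Set G) →
      centSet u = centSet v ∨ centSet u ∩ centSet v = (Subgroup.center G : Set G) := by
  intro u v hu hv
  by_cases h : centSet u ∩ centSet v ⊆ (Subgroup.center G : Set G)
  · exact Or.inr (h.antisymm (Set.subset_inter (center_subset_centSet u) (center_subset_centSet v)))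
  · obtain ⟨w, ⟨hwu, hwv⟩, hw⟩ := Set.not_subset.mp h
    have hw1 := ne_one_of_notMem_center hw
    left
    rw [IsCentralizerAbelian.centSet_eq_of_mem hca (ne_one_of_notMem_center hu) hw1 hwu,
      IsCentralizerAbelian.centSet_eq_of_mem hca (ne_one_of_notMem_center hv) hw1 hwv]

/-- In a centralizer abelian group (the centralizer of every non-identity element is
abelian), for all `u, v ∉ Z(G)` either `C(u) = C(v)` or `C(u) ∩ C(v) = Z(G)`. -/
theorem centralizer_abelian_implies_condition (G : Type*) [Group G] [Fintype G]
    (hca : ∀ x : G, x ≠ 1 → ∀ a ∈ centSet x, ∀ b ∈ centSet x, a * b = b * a) :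
    ∀ u v : G, u ∉ (Subgroup.center G : Set G) → v ∉ (Subgroup.center G : Set G) →
      centSet u = centSet v ∨ centSet u ∩ centSet v = (Subgroup.center G : Set G) :=
  centralizer_abelian_implies_condition_general G hca
end

section
/- Let G be a finite non-abelian group with trivial center such that for all non-identity u, v ∈ G, either C(u) = C(v) or C(u) ∩ C(v) = {e}. Then the isoperimetric number of the commuting graph C_G equals 1. -/
/-!
The identity is adjacent to every other vertex of the commuting graph, so of `S` and `Sᶜ`
the one missing `1` has at least as many boundary edges as elements; with `|S| ≤ |Sᶜ|` this
gives `|∂S| ≥ |S|` in every finite group. Conversely, for a noncentral `a` the condition on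
centralizers forces `C(u) = C(a)` for every `u ∈ C(a) \ {1}`, so the only boundary edges of
`S = C(a) \ {1}` join it to `1`, and `|S| ≤ |C(a)| ≤ |G| / 2` since `C(a)` is a proper subgroup.
-/

section CommutingGraph

variable {G : Type*} [Group G]

lemma centSet_eq_coe_centralizer (u : G) :
    centSet u = (Subgroup.centralizer {u} : Set G) :=
  Set.ext fun _ => Subgroup.mem_centralizer_singleton_iff.symm

lemma two_mul_card_le_of_ne_top [Finite G] {H : Subgroup G} (hH : H ≠ ⊤) :
    2 * Nat.card H ≤ Nat.card G := by
  rw [← H.card_mul_index, mul_comm]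
  exact Nat.mul_le_mul_left _ (H.one_lt_index_of_ne_top hH)

lemma two_mul_ncard_centSet_le [Finite G] {a b : G} (hab : a * b ≠ b * a) :
    2 * (centSet a).ncard ≤ Nat.card G := by
  rw [centSet_eq_coe_centralizer, ← Nat.card_coe_set_eq]
  refine two_mul_card_le_of_ne_top fun h => hab ?_
  exact (Subgroup.mem_centralizer_singleton_iff.mp (h ▸ Subgroup.mem_top b)).symm

lemma edgeBoundary_compl (S : Set G) : edgeBoundary G Sᶜ = edgeBoundary G S := by
  ext e
  refine and_congr_right fun _ => ⟨?_, ?_⟩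
  · rintro ⟨u, hu, v, hv, rfl⟩
    exact ⟨v, not_not.mp hv, u, hu, Sym2.eq_swap⟩
  · rintro ⟨u, hu, v, hv, rfl⟩
    exact ⟨v, hv, u, not_not.mpr hu, Sym2.eq_swap⟩

lemma mk_one_mem_edgeBoundary {S : Set G} {x : G} (hx : x ∈ S) (h1 : (1 : G) ∉ S) :
    s(x, 1) ∈ edgeBoundary G S :=
  ⟨⟨ne_of_mem_of_not_mem hx h1, by simp⟩, x, hx, 1, h1, rfl⟩

lemma injective_mk_one : Function.Injective fun x : G => s(x, 1) :=
  fun _ _ => Sym2.congr_left.mp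

lemma ncard_le_ncard_edgeBoundary_of_one_notMem [Finite G] {S : Set G} (h1 : (1 : G) ∉ S) :
    S.ncard ≤ (edgeBoundary G S).ncard := by
  rw [← Set.ncard_image_of_injective S injective_mk_one]
  exact Set.ncard_le_ncard (Set.image_subset_iff.mpr fun _ hx => mk_one_mem_edgeBoundary hx h1)
    (Set.toFinite _)

lemma ncard_le_ncard_edgeBoundary [Finite G] {S : Set G} (hS : 2 * S.ncard ≤ Nat.card G) :
    S.ncard ≤ (edgeBoundary G S).ncard := by
  by_cases h1 : (1 : G) ∈ S
  · have hcompl := Set.ncard_add_ncard_compl S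
    have hSc := ncard_le_ncard_edgeBoundary_of_one_notMem (S := Sᶜ) (not_not.mpr h1)
    rw [edgeBoundary_compl] at hSc
    omega
  · exact ncard_le_ncard_edgeBoundary_of_one_notMem h1

end CommutingGraph

section DisjointCentralizers

variable {G : Type*} [Group G]
  (hcond : ∀ u v : G, u ≠ 1 → v ≠ 1 →
    centSet u = centSet v ∨ centSet u ∩ centSet v = {(1 : G)})
include hcond

lemma centSet_eq_of_mem_centSet {a u : G} (ha : a ≠ 1) (hu : u ≠ 1) (hua : u ∈ centSet a) :
    centSet u = centSet a :=
  (hcond u a hu ha).resolve_right fun h => ha (h.subset ⟨hua.symm, rfl⟩)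

lemma edgeBoundary_centSet_diff_one {a : G} (ha : a ≠ 1) :
    edgeBoundary G (centSet a \ {1}) = (fun x => s(x, 1)) '' (centSet a \ {1}) := by
  ext e
  constructor
  · rintro ⟨he, u, ⟨hua, hu1⟩, v, hv, rfl⟩
    have huv : u * v = v * u := he.2
    have hv1 : v = 1 := by
      by_contra hv1
      have hvu : v ∈ centSet u := huv.symm
      rw [centSet_eq_of_mem_centSet hcond ha hu1 hua] at hvu
      exact hv ⟨hvu, hv1⟩
    exact ⟨u, ⟨hua, hu1⟩, by rw [hv1]⟩
  · rintro ⟨x, hx, rfl⟩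
    exact mk_one_mem_edgeBoundary hx fun h => h.2 rfl

lemma ncard_edgeBoundary_centSet_diff_one {a : G} (ha : a ≠ 1) :
    (edgeBoundary G (centSet a \ {1})).ncard = (centSet a \ {1}).ncard := by
  rw [edgeBoundary_centSet_diff_one hcond ha, Set.ncard_image_of_injective _ injective_mk_one]

end DisjointCentralizers

lemma natCast_le_div_two_iff {m n : ℕ} : (n : ℝ) ≤ m / 2 ↔ 2 * n ≤ m := by
  rw [le_div_iff₀ two_pos, mul_comm]
  exact_mod_cast Iff.rfl

theorem isoperimetric_number_trivial_center_general (G : Type*) [Group G] [Fintype G]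
    (hna : ¬ ∀ a b : G, a * b = b * a)
    (hcond : ∀ u v : G, u ≠ 1 → v ≠ 1 →
      centSet u = centSet v ∨ centSet u ∩ centSet v = {(1 : G)}) :
    IsLeast
      {r : ℝ | ∃ S : Set G, 0 < Nat.card S ∧
        (Nat.card S : ℝ) ≤ (Fintype.card G : ℝ) / 2 ∧
        r = (Nat.card (edgeBoundary G S) : ℝ) / Nat.card S}
      1 := by
  simp only [Nat.card_coe_set_eq, ← Nat.card_eq_fintype_card, natCast_le_div_two_iff]
  push Not at hna
  obtain ⟨a, b, hab⟩ := hna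
  have ha : a ≠ 1 := by rintro rfl; simp at hab
  have hpos : 0 < (centSet a \ {1}).ncard := (Set.ncard_pos (Set.toFinite _)).mpr ⟨a, rfl, ha⟩
  refine ⟨⟨centSet a \ {1}, hpos, ?_, ?_⟩, ?_⟩
  · exact (Nat.mul_le_mul_left 2 (Set.ncard_sdiff_singleton_le _ _)).trans
      (two_mul_ncard_centSet_le hab)
  · rw [ncard_edgeBoundary_centSet_diff_one hcond ha, div_self (by positivity)]
  · rintro r ⟨S, hSpos, hS, rfl⟩
    rw [le_div_iff₀ (by exact_mod_cast hSpos), one_mul]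
    exact_mod_cast ncard_le_ncard_edgeBoundary hS

/-- For a finite non-abelian group with trivial center in which any two non-identity
elements `u, v` satisfy `C(u) = C(v)` or `C(u) ∩ C(v) = {1}`, the isoperimetric number of
the commuting graph equals 1. -/
theorem isoperimetric_number_trivial_center (G : Type*) [Group G] [Fintype G]
    (hna : ¬ ∀ a b : G, a * b = b * a)
    (hZ : Subgroup.center G = ⊥)
    (hcond : ∀ u v : G, u ≠ 1 → v ≠ 1 →
      centSet u = centSet v ∨ centSet u ∩ centSet v = {(1 : G)}) :
    IsLeast
      {r : ℝ | ∃ S : Set G, 0 < Nat.card S ∧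
        (Nat.card S : ℝ) ≤ (Fintype.card G : ℝ) / 2 ∧
        r = (Nat.card (edgeBoundary G S) : ℝ) / Nat.card S}
      1 :=
  isoperimetric_number_trivial_center_general G hna hcond
end
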